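/- Suppose the treatment design D is such that each exposure x_i has positive variance, i.e. Var[x_i(z)] > 0 for all i ∈ {1,…,n}. Then under the linear response assumption the ERL estimator is unbiased: E[τ̂(z)] = τ, where the expectation is over z ∼ D. -/

import Mathlib

open Finset Matrix

/-- The sign map from Booleans to `{-1, 1} ⊆ ℝ`. -/
def sgn (b : Bool) : ℝ := if b then 1 else -1

/-- Expectation of `f` under the (finitely supported) design `D`. -/
noncomputable def pexp {α : Type*} [Fintype α] (D f : α → ℝ) : ℝ :=
  ∑ ω, D ω * f ω

/-- Variance of `f` under the design `D`. -/
noncomputable def pvar {α : Type*} [Fintype α] (D f : α → ℝ) : ℝ :=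
  pexp D (fun ω => (f ω - pexp D f) ^ 2)

/-- Covariance of `f` and `g` under the design `D`. -/
noncomputable def pcov {α : Type*} [Fintype α] (D f g : α → ℝ) : ℝ :=
  pexp D (fun ω => (f ω - pexp D f) * (g ω - pexp D g))

/-!
Each summand of `τ̂` has expectation `E[Y (x - E x)] / Var x = Cov(Y, x) / Var x`, the centred
exposure having mean zero. For the affine response `Y = μ x + β` this covariance is `μ Var x`,
so `E[τ̂] = (2/n) ∑ μᵢ`. Since the rows of `W` sum to one, the exposures under the all-ones and
all-minus-ones designs are `1` and `-1`, so `τ = (1/n) ∑ 2 μᵢ` as well.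
-/

section Moments

variable {α ι : Type*} [Fintype α] {D : α → ℝ}

lemma pexp_add (f g : α → ℝ) :
    pexp D (fun ω => f ω + g ω) = pexp D f + pexp D g := by
  simp only [pexp, mul_add, sum_add_distrib]

lemma pexp_const_mul (c : ℝ) (f : α → ℝ) :
    pexp D (fun ω => c * f ω) = c * pexp D f := by
  simp only [pexp, mul_sum]
  exact sum_congr rfl fun _ _ => by ring

lemma pexp_div_const (f : α → ℝ) (c : ℝ) :
    pexp D (fun ω => f ω / c) = pexp D f / c := by
  simp only [pexp, sum_div, mul_div_assoc]

lemma pexp_sum (s : Finset ι) (f : ι → α → ℝ) :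
    pexp D (fun ω => ∑ i ∈ s, f i ω) = ∑ i ∈ s, pexp D (f i) := by
  simp only [pexp, mul_sum]
  exact sum_comm

lemma pexp_const (hD : ∑ ω, D ω = 1) (c : ℝ) : pexp D (fun _ => c) = c := by
  rw [pexp, ← sum_mul, hD, one_mul]

lemma pexp_sub_pexp (hD : ∑ ω, D ω = 1) (f : α → ℝ) :
    pexp D (fun ω => f ω - pexp D f) = 0 := by
  simp only [sub_eq_add_neg, pexp_add, pexp_const hD, add_neg_cancel]

lemma pexp_mul_sub_pexp (hD : ∑ ω, D ω = 1) (f g : α → ℝ) :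
    pexp D (fun ω => g ω * (f ω - pexp D f)) = pcov D g f := by
  have hsplit : (fun ω => g ω * (f ω - pexp D f)) =
      fun ω => (g ω - pexp D g) * (f ω - pexp D f) + pexp D g * (f ω - pexp D f) := by
    funext ω; ring
  rw [hsplit, pexp_add, pexp_const_mul, pexp_sub_pexp hD, mul_zero, add_zero, pcov]

lemma pcov_affine_left (hD : ∑ ω, D ω = 1) (a b : ℝ) (f : α → ℝ) :
    pcov D (fun ω => a * f ω + b) f = a * pvar D f := by
  have hmean : pexp D (fun ω => a * f ω + b) = a * pexp D f + b := by
    rw [pexp_add, pexp_const_mul, pexp_const hD]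
  rw [pvar, ← pexp_const_mul, pcov, hmean]
  congr 1
  funext ω
  ring

end Moments

lemma sum_mul_sgn_of_sum_eq_one {ι : Type*} [Fintype ι] {w : ι → ℝ} (hw : ∑ j, w j = 1)
    (b : Bool) : ∑ j, w j * sgn b = sgn b := by
  rw [← sum_mul, hw, one_mul]

/-- Treatment vectors in `{-1,1}^m` are encoded as `ω : Fin m → Bool` via `sgn`;
the all-ones vector is `fun _ => true` and the all-minus-ones vector is `fun _ => false`. -/
theorem erl_unbiased_general
    (n m : ℕ)
    (W : Matrix (Fin n) (Fin m) ℝ)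
    (hWrow : ∀ i, ∑ j, W i j = 1)
    (D : (Fin m → Bool) → ℝ) (hD1 : ∑ ω, D ω = 1)
    (μ β : Fin n → ℝ)
    (x : Fin n → (Fin m → Bool) → ℝ)
    (hx : ∀ i ω, x i ω = ∑ j, W i j * sgn (ω j))
    (Y : Fin n → (Fin m → Bool) → ℝ)
    (hY : ∀ i ω, Y i ω = μ i * x i ω + β i)
    (hvar : ∀ i, 0 < pvar D (x i))
    (τhat : (Fin m → Bool) → ℝ)
    (hτhat : ∀ ω, τhat ω = (2 / n : ℝ) *
      ∑ i, Y i ω * ((x i ω - pexp D (x i)) / pvar D (x i)))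
    (τ : ℝ)
    (hτ : τ = (1 / n : ℝ) * ∑ i, (Y i (fun _ => true) - Y i (fun _ => false))) :
    pexp D τhat = τ := by
  have hterm : ∀ i, pexp D (fun ω => Y i ω * ((x i ω - pexp D (x i)) / pvar D (x i))) = μ i := by
    intro i
    simp only [← mul_div_assoc, pexp_div_const, pexp_mul_sub_pexp hD1, funext (hY i),
      pcov_affine_left hD1]
    exact mul_div_cancel_right₀ _ (hvar i).ne'
  have heffect : ∀ i, Y i (fun _ => true) - Y i (fun _ => false) = 2 * μ i := by
    intro i
    simp only [hY, hx, sum_mul_sgn_of_sum_eq_one (hWrow i)]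
    norm_num [sgn]
    ring
  rw [funext hτhat, pexp_const_mul, pexp_sum, hτ]
  simp only [hterm, heffect, ← mul_sum]
  ring

/-- If every exposure has positive variance, the ERL estimator is an
unbiased estimate of the average treatment effect: E[τ̂] = τ.
Treatment vectors in `{-1,1}^m` are encoded as `ω : Fin m → Bool` via `sgn`;
the all-ones vector is `fun _ => true` and the all-minus-ones vector is `fun _ => false`. -/
theorem erl_unbiased
    (n m : ℕ) (hn : 0 < n) (hm : 0 < m)
    (W : Matrix (Fin n) (Fin m) ℝ)
    (hWnn : ∀ i j, 0 ≤ W i j)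
    (hWrow : ∀ i, ∑ j, W i j = 1)
    (D : (Fin m → Bool) → ℝ) (hD0 : ∀ ω, 0 ≤ D ω) (hD1 : ∑ ω, D ω = 1)
    (μ β : Fin n → ℝ)
    (x : Fin n → (Fin m → Bool) → ℝ)
    (hx : ∀ i ω, x i ω = ∑ j, W i j * sgn (ω j))
    (Y : Fin n → (Fin m → Bool) → ℝ)
    (hY : ∀ i ω, Y i ω = μ i * x i ω + β i)
    (hvar : ∀ i, 0 < pvar D (x i))
    (τhat : (Fin m → Bool) → ℝ)
    (hτhat : ∀ ω, τhat ω = (2 / n : ℝ) *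
      ∑ i, Y i ω * ((x i ω - pexp D (x i)) / pvar D (x i)))
    (τ : ℝ)
    (hτ : τ = (1 / n : ℝ) * ∑ i, (Y i (fun _ => true) - Y i (fun _ => false))) :
    pexp D τhat = τ :=
  erl_unbiased_general n m W hWrow D hD1 μ β x hx Y hY hvar τhat hτhat τ hτ
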